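/- arXiv:2109.13175 — 2 statements merged into one kernel-verified Lean document; each statement's English description precedes it below -/
import Mathlib

section
/- The equilibrium exposure profile g_eq(t) = min(B/(β I(t)(C - λ(t))), 1)·1_{C > λ(t)} + 1_{C ≤ λ(t)} is the unique minimizer over g^α ∈ [0,1] of the linear function g^α ↦ (-B + C β g_eq(t) I(t) - λ(t) β g_eq(t) I(t)) P(t) g^α when fixed-point consistency g^α = g_eq is imposed, assuming P(t) > 0, I(t) > 0, B > 0. More precisely: the fixed-point equation g = argmin_{h ∈ [0,1]} h·(-B + (C - λ) β g I)·P has the unique solution g = min(B/(β I (C - λ)), 1) when C > λ, and g = 1 when C ≤ λ. -/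
/-- The pure population equilibrium exposure is the unique fixed point of the
pointwise Hamiltonian minimization. -/
theorem stmt6 (B C β P I lam : ℝ)
    (hB : 0 < B) (hC : 0 < C) (hβ : 0 < β) (hP : 0 < P) (hI : 0 < I) :
    ∀ g ∈ Set.Icc (0 : ℝ) 1,
      (IsMinOn (fun h : ℝ => (-B + C * β * g * I - lam * β * g * I) * P * h)
          (Set.Icc (0 : ℝ) 1) g ↔
        g = (if C > lam then min (B / (β * I * (C - lam))) 1 else 1)) := by
  intro g hg
  obtain ⟨hg0, hg1⟩ := hg
  set c : ℝ := -B + C * β * g * I - lam * β * g * I with hc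
  constructor
  · intro hmin
    rw [isMinOn_iff] at hmin
    have h0 := hmin 0 ⟨le_refl 0, by norm_num⟩
    have h1 := hmin 1 ⟨by norm_num, le_refl 1⟩
    split_ifs with hCl
    · have hK : 0 < β * I * (C - lam) := mul_pos (mul_pos hβ hI) (sub_pos.mpr hCl)
      rcases le_or_gt (B / (β * I * (C - lam))) 1 with hle | hlt
      · -- B ≤ K : the minimizer is B/K, i.e. c = 0
        have hBK : B ≤ β * I * (C - lam) := by
          rw [div_le_one hK] at hle
          exact hle
        rw [min_eq_left hle]
        have hc0 : c = 0 := by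
          rcases lt_trichotomy c 0 with h | h | h
          · exfalso
            have hge : (1:ℝ) ≤ g := by
              nlinarith [mul_pos hP (neg_pos.mpr h)]
            have hg1' : g = 1 := le_antisymm hg1 hge
            rw [hc, hg1'] at h
            nlinarith
          · exact h
          · exfalso
            have hle0 : g ≤ 0 := by
              nlinarith [mul_pos hP h]
            have hg0' : g = 0 := le_antisymm hle0 hg0
            rw [hc, hg0'] at h
            nlinarith
        have hKg : β * I * (C - lam) * g = B := by
          rw [hc] at hc0
          nlinarith
        rw [eq_div_iff hK.ne']
        nlinarith [hKg]
      · rw [min_eq_right hlt.le]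
        have hBK : β * I * (C - lam) < B := by
          rw [lt_div_iff₀ hK] at hlt
          nlinarith
        have hcneg : c < 0 := by
          rw [hc]
          nlinarith [mul_le_of_le_one_right hK.le hg1]
        by_contra hne
        have hglt : g < 1 := lt_of_le_of_ne hg1 hne
        nlinarith [mul_pos (mul_pos hP (neg_pos.mpr hcneg)) (sub_pos.mpr hglt)]
    · push_neg at hCl
      have hcneg : c < 0 := by
        rw [hc]
        have h1' : β * I * (C - lam) ≤ 0 :=
          mul_nonpos_of_nonneg_of_nonpos (mul_pos hβ hI).le (by linarith)
        nlinarith [mul_nonpos_of_nonpos_of_nonneg h1' hg0]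
      by_contra hne
      have hglt : g < 1 := lt_of_le_of_ne hg1 hne
      nlinarith [mul_pos (mul_pos hP (neg_pos.mpr hcneg)) (sub_pos.mpr hglt)]
  · intro hgeq
    rw [isMinOn_iff]
    intro x hx
    obtain ⟨hx0, hx1⟩ := hx
    split_ifs at hgeq with hCl
    · have hK : 0 < β * I * (C - lam) := mul_pos (mul_pos hβ hI) (sub_pos.mpr hCl)
      rcases le_or_gt (B / (β * I * (C - lam))) 1 with hle | hlt
      · rw [min_eq_left hle] at hgeq
        have hc0 : c = 0 := by
          rw [hc, hgeq]
          field_simp [(sub_pos.mpr hCl).ne']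
          ring
        rw [hc0]
        simp
      · rw [min_eq_right hlt.le] at hgeq
        have hBK : β * I * (C - lam) < B := by
          rw [lt_div_iff₀ hK] at hlt
          nlinarith
        have hcneg : c < 0 := by
          rw [hc, hgeq]
          nlinarith
        rw [hgeq]
        nlinarith [mul_nonneg (mul_pos hP (neg_pos.mpr hcneg)).le (sub_nonneg.mpr hx1)]
    · push_neg at hCl
      have hcneg : c < 0 := by
        rw [hc, hgeq]
        nlinarith [mul_nonpos_of_nonneg_of_nonpos (mul_pos hβ hI).le
          (show C - lam ≤ 0 by linarith)]
      rw [hgeq]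
      nlinarith [mul_nonneg (mul_pos hP (neg_pos.mpr hcneg)).le (sub_nonneg.mpr hx1)]
end

section
/- Fix constants B, β, κ, C > 0, reals λ < C, P > 0, P_del ≥ 0, M ≥ 0, I_d > 0, η ≥ 1 with (1-1/η)P_del + M/η > 0. Then the unique minimizer over h ∈ [0,1] of the linear function h ↦ -B h ((1-1/η) P_del + M/η) + (C - λ) β κ I_d P g h, subject to the Nash fixed-point condition g = h, is g = min( B((1-1/η)P_del + M/η) / (β P κ I_d (C - λ)), 1 ). -/
/-- Pointwise population equilibrium in the detection model: unique fixed point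
of the linear minimization over [0,1]. -/
theorem stmt19 (B β κ C lam P Pdel M Id η : ℝ)
    (hB : 0 < B) (hβ : 0 < β) (hκ : 0 < κ) (hC : 0 < C) (hlam : lam < C)
    (hP : 0 < P) (hPdel : 0 ≤ Pdel) (hM : 0 ≤ M) (hId : 0 < Id) (hη : 1 ≤ η)
    (hben : 0 < (1 - 1 / η) * Pdel + M / η) :
    ∀ g ∈ Set.Icc (0 : ℝ) 1,
      (IsMinOn (fun h : ℝ =>
          -B * h * ((1 - 1 / η) * Pdel + M / η) +
            (C - lam) * β * κ * Id * P * g * h) (Set.Icc (0 : ℝ) 1) g ↔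
        g = min (B * ((1 - 1 / η) * Pdel + M / η) /
          (β * P * κ * Id * (C - lam))) 1) := by
  intro g hg
  obtain ⟨hg0, hg1⟩ := hg
  have hC' : 0 < C - lam := sub_pos.mpr hlam
  set a := (C - lam) * β * κ * Id * P with hadef
  have ha : 0 < a := by positivity
  set b := B * ((1 - 1 / η) * Pdel + M / η) with hbdef
  have hb : 0 < b := mul_pos hB hben
  have hden : β * P * κ * Id * (C - lam) = a := by rw [hadef]; ring
  have hfun : (fun h : ℝ => -B * h * ((1 - 1 / η) * Pdel + M / η) +
      (C - lam) * β * κ * Id * P * g * h) = fun h => (a * g - b) * h := by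
    funext h; rw [hadef, hbdef]; ring
  rw [hfun, hden, isMinOn_iff]
  constructor
  · intro hmin
    rcases lt_trichotomy (a * g - b) 0 with hc | hc | hc
    · have h1 := hmin 1 ⟨zero_le_one, le_refl 1⟩
      have hge : 1 ≤ g := by nlinarith
      have hgeq : g = 1 := le_antisymm hg1 hge
      have hle : 1 ≤ b / a := by
        rw [le_div_iff₀ ha]; nlinarith
      rw [hgeq, min_eq_right hle]
    · have hgeq : g = b / a := by
        field_simp; linarith
      have : b / a ≤ 1 := hgeq ▸ hg1
      rw [min_eq_left this, hgeq]
    · have h0 := hmin 0 ⟨le_refl 0, zero_le_one⟩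
      simp only [mul_zero] at h0
      nlinarith
  · intro hgeq h hh
    obtain ⟨hh0, hh1⟩ := hh
    rcases le_or_gt (b / a) 1 with hle | hlt
    · rw [min_eq_left hle] at hgeq
      have hc : a * g - b = 0 := by
        rw [hgeq]; field_simp; ring
      rw [hc]; simp
    · rw [min_eq_right hlt.le] at hgeq
      have hba : a < b := by
        have := (one_lt_div ha).mp hlt; linarith
      subst hgeq
      nlinarith
end
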